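/- arXiv:2408.11186 — 6 statements merged into one kernel-verified Lean document; each statement's English description precedes it below -/
import Mathlib

section
/- Let n ≥ 2 be a natural number, let γ be a real number with 0 ≤ γ ≤ 1, and let θ ∈ (0, π/2]. Define θ' = arcsin(√(1 − 1/n) · sin θ) and θ'' = arcsin(√(1 − 1/(2n)) · sin θ). If sin θ · √(1 − 1/(2n)) ≥ 4n · √(1 − γ²), then θ'' − θ' ≥ arccos γ. -/
/-!
Write `s = sin θ`, `a = √(1 - 1/n)`, `b = √(1 - 1/(2n))`. Since `sin` is 1-Lipschitz, `arcsin`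
grows at least as fast as the identity, so `θ'' - θ' ≥ (b - a) s`. On the other side, the
hypothesis gives `arccos γ = arcsin √(1 - γ²) ≤ arcsin (s b / (4n))`, and `b - a ≈ 1/(4n)` is
large enough that `sin ((b - a) s) ≥ s b / (4n)`, by `sin t ≥ t - t³/6`.
-/

open Real

theorem sub_le_arcsin_sub_arcsin {x y : ℝ} (hx : -1 ≤ x) (hxy : x ≤ y) (hy : y ≤ 1) :
    y - x ≤ arcsin y - arcsin x := by
  have hmono : arcsin x ≤ arcsin y := monotone_arcsin hxy
  calc y - x = sin (arcsin y) - sin (arcsin x) := by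
        rw [sin_arcsin (by linarith) hy, sin_arcsin hx (by linarith)]
    _ ≤ |arcsin y - arcsin x| := (le_abs_self _).trans (abs_sin_sub_sin_le _ _)
    _ = arcsin y - arcsin x := abs_of_nonneg (sub_nonneg.mpr hmono)

theorem arcsin_le_of_le_sub_cube {x t : ℝ} (ht0 : 0 < t) (ht : t ≤ π / 2)
    (hx : x ≤ t - t ^ 3 / 6) : arcsin x ≤ t :=
  calc arcsin x ≤ arcsin (sin t) := monotone_arcsin (hx.trans (sin_gt_sub_cube ht0).le)
    _ = t := arcsin_sin (by linarith) ht

/-- The gap `b - a = (m / 2) / (a + b)` exceeds `b m / 4` by the factor `2 / (b (a + b))`, and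
`b (a + b) ≤ 2 - 5m/4` leaves enough slack to absorb the cubic term. -/
theorem mul_mul_div_four_le_gap_sub_cube {a b m s : ℝ} (ha : 0 ≤ a) (hb : 0 ≤ b)
    (ha2 : a ^ 2 = 1 - m) (hb2 : b ^ 2 = 1 - m / 2) (hm0 : 0 < m) (hm : m ≤ 1 / 2)
    (hs0 : 0 ≤ s) (hs1 : s ≤ 1) :
    s * b * m / 4 ≤ s * (b - a) - (s * (b - a)) ^ 3 / 6 := by
  set t := s * (b - a) with ht
  have hgap : (b - a) * (a + b) = m / 2 := by nlinarith
  have hsum : 1 ≤ a + b := by nlinarith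
  have hba : 0 ≤ b - a := by nlinarith
  have ht0 : 0 ≤ t := mul_nonneg hs0 hba
  have htm : t ≤ m / 2 := by nlinarith
  have hprod : b * (a + b) ≤ 2 - 5 * m / 4 := by nlinarith [sq_nonneg (a - b)]
  have hsq : t ^ 2 ≤ m / 8 := by nlinarith
  have hcube : t ^ 3 / 6 ≤ t * (5 * m / 8) := by nlinarith [mul_le_mul_of_nonneg_left hsq ht0]
  have hlin : s * b * m / 4 * (a + b) ≤ t * (1 - 5 * m / 8) * (a + b) := by
    have hta : t * (a + b) = s * (m / 2) := by rw [ht, mul_assoc, hgap]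
    have := mul_le_mul_of_nonneg_left hprod (by positivity : 0 ≤ s * m / 4)
    linear_combination this - (1 - 5 * m / 8) * hta
  nlinarith [le_of_mul_le_mul_right hlin (by linarith)]

theorem arcsin_le_mul_sqrt_sub_sqrt {N s : ℝ} (hN : 2 ≤ N) (hs0 : 0 < s) (hs1 : s ≤ 1) :
    arcsin (s * √(1 - 1 / (2 * N)) / (4 * N)) ≤ s * (√(1 - 1 / (2 * N)) - √(1 - 1 / N)) := by
  have hm0 : 0 < 1 / N := by positivity
  have hm : 1 / N ≤ 1 / 2 := one_div_le_one_div_of_le (by norm_num) hN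
  have hhalf : 1 / (2 * N) = 1 / N / 2 := by rw [mul_comm, div_div]
  have ha2 : √(1 - 1 / N) ^ 2 = 1 - 1 / N := sq_sqrt (by linarith)
  have hb2 : √(1 - 1 / (2 * N)) ^ 2 = 1 - 1 / N / 2 := by rw [hhalf, sq_sqrt (by linarith)]
  have hlt : √(1 - 1 / N) < √(1 - 1 / (2 * N)) :=
    Real.sqrt_lt_sqrt (by linarith) (by rw [hhalf]; linarith)
  have hb1 : √(1 - 1 / (2 * N)) ≤ 1 := Real.sqrt_le_one.mpr (by rw [hhalf]; linarith)
  apply arcsin_le_of_le_sub_cube (mul_pos hs0 (sub_pos.mpr hlt))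
  · nlinarith [Real.sqrt_nonneg (1 - 1 / N), pi_gt_three]
  · convert mul_mul_div_four_le_gap_sub_cube (Real.sqrt_nonneg _) (Real.sqrt_nonneg _) ha2 hb2
      hm0 hm hs0.le hs1 using 1
    field_simp

theorem stmt_0_general (n : ℕ) (hn : 2 ≤ n) (γ θ : ℝ)
    (hγ0 : 0 ≤ γ) (hθ0 : 0 < θ) (hθ1 : θ ≤ π / 2)
    (θ' θ'' : ℝ)
    (hθ' : θ' = arcsin (Real.sqrt (1 - 1 / (n : ℝ)) * Real.sin θ))
    (hθ'' : θ'' = arcsin (Real.sqrt (1 - 1 / (2 * (n : ℝ))) * Real.sin θ))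
    (hcond : Real.sin θ * Real.sqrt (1 - 1 / (2 * (n : ℝ)))
      ≥ 4 * (n : ℝ) * Real.sqrt (1 - γ ^ 2)) :
    θ'' - θ' ≥ arccos γ := by
  have hN : (2 : ℝ) ≤ n := by exact_mod_cast hn
  have hs0 : 0 < sin θ := sin_pos_of_pos_of_lt_pi hθ0 (by linarith [pi_pos])
  set a := √(1 - 1 / (n : ℝ))
  set b := √(1 - 1 / (2 * (n : ℝ)))
  have hγ : √(1 - γ ^ 2) ≤ sin θ * b / (4 * n) := by
    rw [le_div_iff₀ (by positivity)]; linarith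
  have hab : a ≤ b := Real.sqrt_le_sqrt (by gcongr; linarith)
  have hb1 : b ≤ 1 := Real.sqrt_le_one.mpr (sub_le_self _ (by positivity))
  have hbs : b * sin θ ≤ 1 := mul_le_one₀ hb1 hs0.le (sin_le_one θ)
  calc arccos γ = arcsin √(1 - γ ^ 2) := arccos_eq_arcsin hγ0
    _ ≤ arcsin (sin θ * b / (4 * n)) := monotone_arcsin hγ
    _ ≤ sin θ * (b - a) := arcsin_le_mul_sqrt_sub_sqrt hN hs0 (sin_le_one θ)
    _ = b * sin θ - a * sin θ := by ring
    _ ≤ θ'' - θ' := by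
      rw [hθ', hθ'']
      exact sub_le_arcsin_sub_arcsin
        (neg_one_lt_zero.le.trans (mul_nonneg (Real.sqrt_nonneg _) hs0.le))
        (mul_le_mul_of_nonneg_right hab hs0.le) hbs

/-- Lemma 1 of the paper. -/
theorem stmt_0 (n : ℕ) (hn : 2 ≤ n) (γ θ : ℝ)
    (hγ0 : 0 ≤ γ) (hγ1 : γ ≤ 1) (hθ0 : 0 < θ) (hθ1 : θ ≤ π / 2)
    (θ' θ'' : ℝ)
    (hθ' : θ' = arcsin (Real.sqrt (1 - 1 / (n : ℝ)) * Real.sin θ))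
    (hθ'' : θ'' = arcsin (Real.sqrt (1 - 1 / (2 * (n : ℝ))) * Real.sin θ))
    (hcond : Real.sin θ * Real.sqrt (1 - 1 / (2 * (n : ℝ)))
      ≥ 4 * (n : ℝ) * Real.sqrt (1 - γ ^ 2)) :
    θ'' - θ' ≥ arccos γ :=
  stmt_0_general n hn γ θ hγ0 hθ0 hθ1 θ' θ'' hθ' hθ'' hcond
end

section
/- Let n ≥ 2 be a natural number and let c be a real number with 0 < c ≤ 2n. Then there exists a real number κ ≥ √(n−1) such that 2n · √(1 − ((κ² − (n−1))/(κ² + (n−1)))²) = c. -/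
/-!
Put `m = n - 1` and `s = c / (2n) ∈ (0, 1]`. The map `x ↦ (x - m) / (x + m)` sends `[m, ∞)` onto
`[0, 1)`, with inverse `t ↦ m (1 + t) / (1 - t)`; so one can take `κ² = m (1 + t) / (1 - t)` for
`t = √(1 - s²) < 1`, and then `√(1 - t²) = s`.
-/

open Real

lemma sqrt_one_sub_sq_sqrt_one_sub_sq {s : ℝ} (hs0 : 0 ≤ s) (hs1 : s ≤ 1) :
    √(1 - √(1 - s ^ 2) ^ 2) = s := by
  rw [sq_sqrt (by nlinarith), sub_sub_cancel, sqrt_sq hs0]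

lemma sqrt_one_sub_sq_lt_one {s : ℝ} (hs : 0 < s) : √(1 - s ^ 2) < 1 :=
  (sqrt_lt' one_pos).mpr (by nlinarith)

lemma exists_sqrt_le_and_sq_sub_div_sq_add_eq {m t : ℝ} (hm : 0 < m) (ht0 : 0 ≤ t) (ht1 : t < 1) :
    ∃ κ : ℝ, √m ≤ κ ∧ (κ ^ 2 - m) / (κ ^ 2 + m) = t := by
  have h1t : 0 < 1 - t := by linarith
  have hm_le : m ≤ m * (1 + t) / (1 - t) := by
    rw [le_div_iff₀ h1t]; nlinarith
  refine ⟨√(m * (1 + t) / (1 - t)), sqrt_le_sqrt hm_le, ?_⟩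
  rw [sq_sqrt (hm.le.trans hm_le), div_eq_iff (by positivity)]
  field_simp
  ring

/-- Existence of a parameter κ satisfying equation (1) of the paper. -/
theorem stmt_3 (n : ℕ) (hn : 2 ≤ n) (c : ℝ) (hc0 : 0 < c) (hc1 : c ≤ 2 * (n : ℝ)) :
    ∃ κ : ℝ, Real.sqrt ((n : ℝ) - 1) ≤ κ ∧
      2 * (n : ℝ) * Real.sqrt (1 - ((κ ^ 2 - ((n : ℝ) - 1)) / (κ ^ 2 + ((n : ℝ) - 1))) ^ 2)
        = c := by
  have h2n : (0 : ℝ) < 2 * n := by positivity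
  have hm : (0 : ℝ) < n - 1 := by
    have : (2 : ℝ) ≤ n := by exact_mod_cast hn
    linarith
  set s := c / (2 * n)
  have hs0 : 0 < s := div_pos hc0 h2n
  have hs1 : s ≤ 1 := (div_le_one h2n).mpr hc1
  obtain ⟨κ, hκ, hratio⟩ := exists_sqrt_le_and_sq_sub_div_sq_add_eq hm (sqrt_nonneg _)
    (sqrt_one_sub_sq_lt_one hs0)
  refine ⟨κ, hκ, ?_⟩
  rw [hratio, sqrt_one_sub_sq_sqrt_one_sub_sq hs0.le hs1]
  exact mul_div_cancel₀ c h2n.ne'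
end

section
/- Let n and l be natural numbers, let u, v ∈ ℝⁿ (with the Euclidean inner product), and let S ⊆ {1, …, n} with |S| ≤ l. Suppose vᵢ = −uᵢ for every i ∈ S and vᵢ = uᵢ for every i ∉ S. Let m > 0 and κ > 0, and assume |uᵢ| ≤ m for every i ∈ S and that there exists j ∉ S with |uⱼ| ≥ κ·m. Then ⟨u, v⟩ ≥ ((κ² − l)/(κ² + l))·‖u‖·‖v‖; equivalently, ∠(u, v) ≤ arccos((κ² − l)/(κ² + l)). -/
/-!
Write `A` and `B` for the squared mass of `u` off and on `S`. Since `v` agrees with `u` off `S`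
and is opposite to it on `S`, `‖u‖ = ‖v‖`, `‖u‖ * ‖v‖ = A + B` and `⟪u, v⟫ = A - B`. The hypotheses
give `B ≤ l m²` and `κ² m² ≤ A`, hence `κ² B ≤ l A`, which is exactly
`(κ² - l) (A + B) ≤ (κ² + l) (A - B)`.
-/

open RealInnerProductSpace InnerProductGeometry

theorem InnerProductGeometry.angle_le_arccos_of_mul_le_inner {V : Type*} [NormedAddCommGroup V]
    [InnerProductSpace ℝ V] {u v : V} (hu : u ≠ 0) (hv : v ≠ 0) {c : ℝ}
    (h : c * (‖u‖ * ‖v‖) ≤ ⟪u, v⟫) : angle u v ≤ Real.arccos c :=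
  Real.arccos_le_arccos <| (le_div_iff₀ (mul_pos (norm_pos_iff.2 hu) (norm_pos_iff.2 hv))).2 h

namespace EuclideanSpace

variable {ι : Type*} [Fintype ι] {u v : EuclideanSpace ℝ ι}

theorem norm_eq_of_forall_abs_eq (h : ∀ i, |v i| = |u i|) : ‖v‖ = ‖u‖ := by
  simp only [EuclideanSpace.norm_eq, Real.norm_eq_abs, h]

variable [DecidableEq ι]

theorem norm_sq_eq_sum_compl_add_sum (u : EuclideanSpace ℝ ι) (S : Finset ι) :
    ‖u‖ ^ 2 = ∑ i ∈ Sᶜ, u i ^ 2 + ∑ i ∈ S, u i ^ 2 := by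
  rw [EuclideanSpace.norm_sq_eq, add_comm, Finset.sum_add_sum_compl]
  simp only [Real.norm_eq_abs, sq_abs]

theorem inner_eq_sum_compl_sub_sum_of_neg_on {S : Finset ι}
    (hflip : ∀ i ∈ S, v i = -u i) (hsame : ∀ i ∉ S, v i = u i) :
    ⟪u, v⟫ = ∑ i ∈ Sᶜ, u i ^ 2 - ∑ i ∈ S, u i ^ 2 := by
  rw [PiLp.inner_apply, ← Finset.sum_add_sum_compl S, sub_eq_neg_add, ← Finset.sum_neg_distrib]
  congr 1
  · refine Finset.sum_congr rfl fun i hi => ?_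
    simp only [RCLike.inner_apply, conj_trivial, hflip i hi]
    ring
  · refine Finset.sum_congr rfl fun i hi => ?_
    simp only [RCLike.inner_apply, conj_trivial, hsame i (Finset.mem_compl.1 hi)]
    ring

end EuclideanSpace

theorem div_mul_add_le_sub_of_mul_le_mul {a b c l : ℝ} (hcl : 0 < c + l) (h : c * b ≤ l * a) :
    (c - l) / (c + l) * (a + b) ≤ a - b := by
  rw [div_mul_eq_mul_div, div_le_iff₀ hcl]
  linarith

/-- The central geometric estimate in Case 2.2 of the proof of Theorem 1:
the true gradient `u` and the hypothetical gradient `v` (obtained by flipping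
the signs of at most `l` small coordinates) make an angle of at most
`arccos((κ² − l)/(κ² + l))`. -/
theorem stmt_8 (n l : ℕ) (u v : EuclideanSpace ℝ (Fin n)) (S : Finset (Fin n))
    (hScard : S.card ≤ l)
    (hflip : ∀ i ∈ S, v i = -u i) (hsame : ∀ i ∉ S, v i = u i)
    (m κ : ℝ) (hm : 0 < m) (hκ : 0 < κ)
    (hsmall : ∀ i ∈ S, |u i| ≤ m)
    (hbig : ∃ j ∉ S, κ * m ≤ |u j|) :
    ((κ ^ 2 - (l : ℝ)) / (κ ^ 2 + (l : ℝ))) * (‖u‖ * ‖v‖) ≤ ⟪u, v⟫ ∧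
      InnerProductGeometry.angle u v
        ≤ Real.arccos ((κ ^ 2 - (l : ℝ)) / (κ ^ 2 + (l : ℝ))) := by
  obtain ⟨j, hjS, hj⟩ := hbig
  have hκm : 0 < κ * m := mul_pos hκ hm
  have hnorm : ‖v‖ = ‖u‖ := EuclideanSpace.norm_eq_of_forall_abs_eq fun i => by
    by_cases hi : i ∈ S
    · rw [hflip i hi, abs_neg]
    · rw [hsame i hi]
  have hS : ∑ i ∈ S, u i ^ 2 ≤ l * m ^ 2 := calc
    _ ≤ S.card • m ^ 2 := Finset.sum_le_card_nsmul _ _ _ fun i hi =>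
          sq_le_sq' (abs_le.1 (hsmall i hi)).1 (abs_le.1 (hsmall i hi)).2
    _ ≤ l * m ^ 2 := by rw [nsmul_eq_mul]; gcongr
  have hSc : (κ * m) ^ 2 ≤ ∑ i ∈ Sᶜ, u i ^ 2 := calc
    _ ≤ u j ^ 2 := by simpa only [sq_abs] using pow_le_pow_left₀ hκm.le hj 2
    _ ≤ _ := Finset.single_le_sum (fun i _ => sq_nonneg (u i)) (Finset.mem_compl.2 hjS)
  have hinner : ((κ ^ 2 - l) / (κ ^ 2 + l)) * (‖u‖ * ‖v‖) ≤ ⟪u, v⟫ := by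
    rw [hnorm, ← sq, EuclideanSpace.norm_sq_eq_sum_compl_add_sum u S,
      EuclideanSpace.inner_eq_sum_compl_sub_sum_of_neg_on hflip hsame]
    refine div_mul_add_le_sub_of_mul_le_mul (by positivity) ?_
    calc κ ^ 2 * ∑ i ∈ S, u i ^ 2 ≤ κ ^ 2 * (l * m ^ 2) := by gcongr
      _ = l * (κ * m) ^ 2 := by ring
      _ ≤ l * ∑ i ∈ Sᶜ, u i ^ 2 := by gcongr
  have hu : u ≠ 0 := by
    rintro rfl
    simp only [PiLp.zero_apply, abs_zero] at hj
    linarith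
  have hv : v ≠ 0 := norm_ne_zero_iff.1 (hnorm ▸ norm_ne_zero_iff.2 hu)
  exact ⟨hinner, angle_le_arccos_of_mul_le_inner hu hv hinner⟩
end

section
/- Let E be a real inner product space, let n ≥ 2 be a natural number, let θ ∈ (0, π/2], and let γ ∈ [0, 1] satisfy sin θ · √(1 − 1/(2n)) ≥ 4n · √(1 − γ²). Let τ, x, y ∈ E be nonzero vectors such that ∠(x, τ) ≤ arcsin(√(1 − 1/n) · sin θ) and ∠(x, y) ≤ arccos γ. Then ∠(y, τ) ≤ arcsin(√(1 − 1/(2n)) · sin θ). -/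
/-!
By the triangle inequality for angles, `∠(y, τ) ≤ arccos γ + arcsin (a sin θ)` with
`a = √(1 - 1/n)`, and `arccos γ = arcsin √(1 - γ²)`. Since `arcsin` is superadditive on `[0, 1]`,
it suffices that `√(1 - γ²) + a sin θ ≤ b sin θ` for `b = √(1 - 1/(2n))`. This follows from the
hypothesis together with `b ≤ 4n (b - a)`, which holds because `4n (b - a) (a + b) = 2` and
`a, b ≤ 1`.
-/

open Real

theorem Real.arcsin_add_arcsin_le_arcsin_add {x y : ℝ} (hx : 0 ≤ x) (hy : 0 ≤ y)
    (hxy : x + y ≤ 1) : arcsin x + arcsin y ≤ arcsin (x + y) := by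
  have hy1 : y ≤ 1 := by linarith
  have hx_le : x ≤ √(1 - y ^ 2) := le_sqrt_of_sq_le (by nlinarith)
  have hsum_le : arcsin x + arcsin y ≤ π / 2 := by
    have := arcsin_le_arcsin hx_le
    rw [← arccos_eq_arcsin hy, arccos_eq_pi_div_two_sub_arcsin] at this
    linarith
  have hsum_pos : -(π / 2) < arcsin x + arcsin y := by
    linarith [arcsin_nonneg.2 hx, arcsin_nonneg.2 hy, pi_pos]
  rw [le_arcsin_iff_sin_le' ⟨hsum_pos, hsum_le⟩, sin_add, cos_arcsin, cos_arcsin,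
    sin_arcsin (by linarith) (by linarith), sin_arcsin (by linarith) hy1]
  have hcx : √(1 - x ^ 2) ≤ 1 := sqrt_le_one.2 (by nlinarith)
  have hcy : √(1 - y ^ 2) ≤ 1 := sqrt_le_one.2 (by nlinarith)
  nlinarith [mul_le_mul_of_nonneg_left hcy hx, mul_le_mul_of_nonneg_right hcx hy]

theorem sqrt_one_sub_inv_two_mul_le {m : ℝ} (hm : 1 ≤ m) :
    √(1 - 1 / (2 * m)) ≤ 4 * m * (√(1 - 1 / (2 * m)) - √(1 - 1 / m)) := by
  set a := √(1 - 1 / m)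
  set b := √(1 - 1 / (2 * m))
  have hinv : 1 / m ≤ 1 := by rw [div_le_one (by linarith)]; exact hm
  have hinv2_pos : 0 < 1 / (2 * m) := by positivity
  have hinv2 : 1 / (2 * m) < 1 / m := by gcongr; linarith
  have ha_sq : a ^ 2 = 1 - 1 / m := sq_sqrt (by linarith)
  have hb_sq : b ^ 2 = 1 - 1 / (2 * m) := sq_sqrt (by linarith)
  have ha1 : a ≤ 1 := sqrt_le_one.2 (by linarith)
  have hb1 : b ≤ 1 := sqrt_le_one.2 (by linarith)
  have hdiff : 4 * m * (b - a) * (a + b) = 2 := by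
    have : 4 * m * (b ^ 2 - a ^ 2) = 2 := by
      rw [ha_sq, hb_sq]; field_simp; ring
    linear_combination this
  have hb_pos : 0 < b := sqrt_pos.2 (by linarith)
  have hab_pos : 0 < a + b := by positivity
  have : b * (a + b) ≤ 4 * m * (b - a) * (a + b) := by nlinarith
  exact le_of_mul_le_mul_right this hab_pos

theorem stmt_9_general {E : Type*} [NormedAddCommGroup E] [InnerProductSpace ℝ E]
    (n : ℕ) (hn : 2 ≤ n) (θ γ : ℝ)
    (hθ0 : 0 < θ) (hθ1 : θ ≤ π / 2) (hγ0 : 0 ≤ γ)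
    (hcond : Real.sin θ * Real.sqrt (1 - 1 / (2 * (n : ℝ)))
      ≥ 4 * (n : ℝ) * Real.sqrt (1 - γ ^ 2))
    (τ x y : E)
    (h1 : InnerProductGeometry.angle x τ
      ≤ arcsin (Real.sqrt (1 - 1 / (n : ℝ)) * Real.sin θ))
    (h2 : InnerProductGeometry.angle x y ≤ arccos γ) :
    InnerProductGeometry.angle y τ
      ≤ arcsin (Real.sqrt (1 - 1 / (2 * (n : ℝ))) * Real.sin θ) := by
  set a := √(1 - 1 / (n : ℝ))
  set b := √(1 - 1 / (2 * (n : ℝ)))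
  set c := √(1 - γ ^ 2)
  have hn1 : (1 : ℝ) ≤ n := by exact_mod_cast one_le_two.trans hn
  have hsin0 : 0 ≤ sin θ := sin_nonneg_of_nonneg_of_le_pi hθ0.le (by linarith [pi_pos])
  have hb1 : b * sin θ ≤ 1 :=
    mul_le_one₀ (sqrt_le_one.2 (by linarith [one_div_pos.2 (by positivity : (0 : ℝ) < 2 * n)]))
      hsin0 (sin_le_one θ)
  have hc_le : c + a * sin θ ≤ b * sin θ := by
    have := mul_le_mul_of_nonneg_left (sqrt_one_sub_inv_two_mul_le hn1) hsin0
    nlinarith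
  calc InnerProductGeometry.angle y τ
      ≤ InnerProductGeometry.angle y x + InnerProductGeometry.angle x τ :=
        InnerProductGeometry.angle_le_angle_add_angle y x τ
    _ ≤ arcsin c + arcsin (a * sin θ) := by
        rw [InnerProductGeometry.angle_comm, ← arccos_eq_arcsin hγ0]; exact add_le_add h2 h1
    _ ≤ arcsin (c + a * sin θ) :=
        arcsin_add_arcsin_le_arcsin_add (sqrt_nonneg _)
          (mul_nonneg (sqrt_nonneg _) hsin0) (hc_le.trans hb1)
    _ ≤ arcsin (b * sin θ) := arcsin_le_arcsin hc_le

/-- Lemma 1 combined with the triangle inequality for angles: the relaxed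
angle-update rule encloses the true gradient despite erroneous halfspace
cuts. -/
theorem stmt_9 {E : Type*} [NormedAddCommGroup E] [InnerProductSpace ℝ E]
    (n : ℕ) (hn : 2 ≤ n) (θ γ : ℝ)
    (hθ0 : 0 < θ) (hθ1 : θ ≤ π / 2) (hγ0 : 0 ≤ γ) (hγ1 : γ ≤ 1)
    (hcond : Real.sin θ * Real.sqrt (1 - 1 / (2 * (n : ℝ)))
      ≥ 4 * (n : ℝ) * Real.sqrt (1 - γ ^ 2))
    (τ x y : E) (hτ : τ ≠ 0) (hx : x ≠ 0) (hy : y ≠ 0)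
    (h1 : InnerProductGeometry.angle x τ
      ≤ arcsin (Real.sqrt (1 - 1 / (n : ℝ)) * Real.sin θ))
    (h2 : InnerProductGeometry.angle x y ≤ arccos γ) :
    InnerProductGeometry.angle y τ
      ≤ arcsin (Real.sqrt (1 - 1 / (2 * (n : ℝ))) * Real.sin θ) :=
  stmt_9_general n hn θ γ hθ0 hθ1 hγ0 hcond τ x y h1 h2
end

section
/- Let E be a real inner product space and let g₁, g₂, T ∈ E be nonzero vectors. Let θ_c ∈ [0, π/2] and suppose ∠(g₁, g₂) ≤ θ_c. If ⟨g₂, T⟩ ≤ 0, then ⟨g₁, T⟩ ≤ ‖g₁‖·‖T‖·sin θ_c. -/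
/-!
By the triangle inequality for angles, `∠(g₁, T) ≥ ∠(g₂, T) - ∠(g₁, g₂) ≥ π/2 - θc`, so
`⟪g₁, T⟫ = ‖g₁‖‖T‖ cos ∠(g₁, T) ≤ ‖g₁‖‖T‖ cos (π/2 - θc) = ‖g₁‖‖T‖ sin θc`.
-/

open RealInnerProductSpace InnerProductGeometry Real

section

variable {E : Type*} [NormedAddCommGroup E] [InnerProductSpace ℝ E]

lemma pi_div_two_le_angle_of_inner_nonpos {x y : E} (h : ⟪x, y⟫ ≤ 0) : π / 2 ≤ angle x y := by
  rw [angle, ← not_lt, arccos_lt_pi_div_two, not_lt]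
  exact div_nonpos_of_nonpos_of_nonneg h (by positivity)

lemma inner_le_norm_mul_norm_mul_cos_of_le_angle {x y : E} {α : ℝ} (hα : 0 ≤ α)
    (h : α ≤ angle x y) : ⟪x, y⟫ ≤ ‖x‖ * ‖y‖ * cos α := by
  rw [← cos_angle_mul_norm_mul_norm, mul_comm]
  gcongr
  exact cos_le_cos_of_nonneg_of_le_pi hα (angle_le_pi x y) h

end

theorem stmt_10_general {E : Type*} [NormedAddCommGroup E] [InnerProductSpace ℝ E]
    (g₁ g₂ T : E)
    (θc : ℝ) (hθc1 : θc ≤ Real.pi / 2)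
    (hang : InnerProductGeometry.angle g₁ g₂ ≤ θc)
    (hdesc : ⟪g₂, T⟫ ≤ 0) :
    ⟪g₁, T⟫ ≤ ‖g₁‖ * ‖T‖ * Real.sin θc := by
  have hangle : π / 2 - θc ≤ angle g₁ T := by
    linarith [pi_div_two_le_angle_of_inner_nonpos hdesc, angle_le_angle_add_angle g₂ g₁ T,
      angle_comm g₁ g₂]
  rw [← cos_pi_div_two_sub]
  exact inner_le_norm_mul_norm_mul_cos_of_le_angle (by linarith) hangle

/-- The geometric core of Case 1 of the paper's Corollary: when the two
gradients make an angle at most `θ_c`, an ascent direction for one that is a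
descent direction for the other is nearly orthogonal to both. -/
theorem stmt_10 {E : Type*} [NormedAddCommGroup E] [InnerProductSpace ℝ E]
    (g₁ g₂ T : E) (hg₁ : g₁ ≠ 0) (hg₂ : g₂ ≠ 0) (hT : T ≠ 0)
    (θc : ℝ) (hθc0 : 0 ≤ θc) (hθc1 : θc ≤ Real.pi / 2)
    (hang : InnerProductGeometry.angle g₁ g₂ ≤ θc)
    (hdesc : ⟪g₂, T⟫ ≤ 0) :
    ⟪g₁, T⟫ ≤ ‖g₁‖ * ‖T‖ * Real.sin θc :=
  stmt_10_general g₁ g₂ T θc hθc1 hang hdesc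
end

section
/- Let n ≥ 1 and let f : ℝⁿ → ℝ (with the Euclidean inner product), S ∈ ℝⁿ, β ≥ 0, and g ∈ ℝⁿ satisfy |f(y) − f(S) − ⟨g, y − S⟩| ≤ (β/2)·‖y − S‖² for all y ∈ ℝⁿ. Let (v₁, …, vₙ) be an orthonormal basis of ℝⁿ and let d, κ ≥ 0 with |⟨g, vᵢ⟩| ≤ κ·β·d for every i. Then for every T ∈ ℝⁿ, f(S + T) − f(S) ≤ d·κ·√n·β·‖T‖ + (β/2)·‖T‖². If moreover f(y) ≤ f(S) + ⟨g, y − S⟩ for all y ∈ ℝⁿ, then f(S + T) − f(S) ≤ d·κ·√n·β·‖T‖. -/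
open RealInnerProductSpace

/-!
Parseval's identity in the basis `v` turns the coordinatewise bound `|⟪g, v i⟫| ≤ κ β d` into
`‖g‖ ≤ √n κ β d`, so by Cauchy–Schwarz the linear term `⟪g, T⟫` of the expansion of `f` at `S`
is at most `d κ √n β ‖T‖`. The quadratic error term of smoothness, or nothing at all under
concavity, accounts for the rest.
-/

namespace OrthonormalBasis

variable {ι E : Type*} [Fintype ι] [NormedAddCommGroup E] [InnerProductSpace ℝ E]

theorem norm_le_sqrt_card_mul_of_abs_inner_le (b : OrthonormalBasis ι ℝ E) {x : E} {c : ℝ}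
    (h : ∀ i, |⟪x, b i⟫| ≤ c) : ‖x‖ ≤ √(Fintype.card ι) * c := by
  have hc : 0 ≤ √(Fintype.card ι) * c := by
    cases isEmpty_or_nonempty ι
    · simp
    · exact mul_nonneg (Real.sqrt_nonneg _) ((abs_nonneg _).trans (h (Classical.arbitrary ι)))
  refine (pow_le_pow_iff_left₀ (norm_nonneg x) hc two_ne_zero).1 ?_
  calc ‖x‖ ^ 2 = ∑ i, ⟪x, b i⟫ ^ 2 := (b.sum_sq_inner_left x).symm
    _ ≤ ∑ _i : ι, c ^ 2 := Finset.sum_le_sum fun i _ => sq_le_sq' (abs_le.1 (h i)).1 (abs_le.1 (h i)).2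
    _ = (√(Fintype.card ι) * c) ^ 2 := by
      rw [mul_pow, Real.sq_sqrt (Nat.cast_nonneg _)]
      simp

theorem inner_le_sqrt_card_mul_norm_of_abs_inner_le (b : OrthonormalBasis ι ℝ E) {x : E} {c : ℝ}
    (h : ∀ i, |⟪x, b i⟫| ≤ c) (y : E) : ⟪x, y⟫ ≤ √(Fintype.card ι) * c * ‖y‖ :=
  (real_inner_le_norm x y).trans <|
    mul_le_mul_of_nonneg_right (b.norm_le_sqrt_card_mul_of_abs_inner_le h) (norm_nonneg y)

end OrthonormalBasis

theorem stmt_12_general (n : ℕ)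
    (f : EuclideanSpace ℝ (Fin n) → ℝ) (S : EuclideanSpace ℝ (Fin n))
    (β : ℝ) (g : EuclideanSpace ℝ (Fin n))
    (hsmooth : ∀ y, |f y - f S - ⟪g, y - S⟫| ≤ β / 2 * ‖y - S‖ ^ 2)
    (v : OrthonormalBasis (Fin n) ℝ (EuclideanSpace ℝ (Fin n)))
    (d κ : ℝ)
    (hgb : ∀ i : Fin n, |⟪g, v i⟫| ≤ κ * β * d) :
    (∀ T : EuclideanSpace ℝ (Fin n),
        f (S + T) - f S ≤ d * κ * Real.sqrt n * β * ‖T‖ + β / 2 * ‖T‖ ^ 2) ∧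
      ((∀ y, f y ≤ f S + ⟪g, y - S⟫) →
        ∀ T : EuclideanSpace ℝ (Fin n),
          f (S + T) - f S ≤ d * κ * Real.sqrt n * β * ‖T‖) := by
  have hlinear (T : EuclideanSpace ℝ (Fin n)) : ⟪g, T⟫ ≤ d * κ * Real.sqrt n * β * ‖T‖ := by
    have := v.inner_le_sqrt_card_mul_norm_of_abs_inner_le hgb T
    rw [Fintype.card_fin] at this
    linarith
  refine ⟨fun T => ?_, fun hconcave T => ?_⟩
  · have hupper := (abs_le.1 (hsmooth (S + T))).2
    rw [add_sub_cancel_left] at hupper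
    linarith [hlinear T]
  · have hupper := hconcave (S + T)
    rw [add_sub_cancel_left] at hupper
    linarith [hlinear T]

/-- Conclusion 2 of Theorem 1 of the paper: near-optimality of the responding
agent bounds the benefit of any trade. -/
theorem stmt_12 (n : ℕ) (hn : 1 ≤ n)
    (f : EuclideanSpace ℝ (Fin n) → ℝ) (S : EuclideanSpace ℝ (Fin n))
    (β : ℝ) (hβ : 0 ≤ β) (g : EuclideanSpace ℝ (Fin n))
    (hsmooth : ∀ y, |f y - f S - ⟪g, y - S⟫| ≤ β / 2 * ‖y - S‖ ^ 2)
    (v : OrthonormalBasis (Fin n) ℝ (EuclideanSpace ℝ (Fin n)))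
    (d κ : ℝ) (hd : 0 ≤ d) (hκ : 0 ≤ κ)
    (hgb : ∀ i : Fin n, |⟪g, v i⟫| ≤ κ * β * d) :
    (∀ T : EuclideanSpace ℝ (Fin n),
        f (S + T) - f S ≤ d * κ * Real.sqrt n * β * ‖T‖ + β / 2 * ‖T‖ ^ 2) ∧
      ((∀ y, f y ≤ f S + ⟪g, y - S⟫) →
        ∀ T : EuclideanSpace ℝ (Fin n),
          f (S + T) - f S ≤ d * κ * Real.sqrt n * β * ‖T‖) :=
  stmt_12_general n f S β g hsmooth v d κ hgb
end
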